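/- The language L = {a^n b^m : m ≤ n} ∪ {a^n b^m c} is recognised by a 1-dimensional history-deterministic VASS with coverability acceptance. Concretely, there is a 1-VASS and a resolver function (choosing, letter by letter, based on the history of the run, which transition to take) such that the runs built by the resolver accept exactly the words of L. -/

import Mathlib

open scoped Classical

/-- A `k`-dimensional vector addition system with states over alphabet `A`.
States are `Fin n`; transitions are labelled by a letter and an effect in `ℤ^k`. -/
structure VASS (k : ℕ) (A : Type) where
  n : ℕ
  trans : Set (Fin n × A × (Fin k → ℤ) × Fin n)
  init : Fin n
  acc : Set (Fin n)

namespace VASS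

variable {k : ℕ} {A : Type}

/-- A configuration: a state together with counters in `ℕ^k`. -/
abbrev Conf (V : VASS k A) := Fin V.n × (Fin k → ℕ)

/-- `Run V c w c'`: there is a valid run of `V` from configuration `c` to `c'`
reading the word `w`, with counters staying nonnegative throughout. -/
inductive Run (V : VASS k A) : V.Conf → List A → V.Conf → Prop
  | nil (c : V.Conf) : Run V c [] c
  | cons {q : Fin V.n} {v : Fin k → ℕ} {a : A} {d : Fin k → ℤ} {q' : Fin V.n}
      {w : List A} {c' : V.Conf} :
      (q, a, d, q') ∈ V.trans →
      (∀ i, 0 ≤ (v i : ℤ) + d i) →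
      Run V (q', fun i => ((v i : ℤ) + d i).toNat) w c' →
      Run V (q, v) (a :: w) c'

/-- The initial configuration: initial state with all counters zero. -/
def initConf (V : VASS k A) : V.Conf := (V.init, fun _ => 0)

/-- Coverability acceptance: some run ends in an accepting state. -/
def LangCover (V : VASS k A) : Set (List A) :=
  {w | ∃ c, V.Run V.initConf w c ∧ c.1 ∈ V.acc}

/-- Reachability acceptance: some run ends in an accepting state with all counters zero. -/
def LangReach (V : VASS k A) : Set (List A) :=
  {w | ∃ c, V.Run V.initConf w c ∧ c.1 ∈ V.acc ∧ c.2 = fun _ => 0}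

/-- Deterministic: at most one outgoing transition per state and letter. -/
def Det (V : VASS k A) : Prop :=
  ∀ q a d₁ q₁ d₂ q₂, (q, a, d₁, q₁) ∈ V.trans → (q, a, d₂, q₂) ∈ V.trans →
    d₁ = d₂ ∧ q₁ = q₂

/-- A resolver: given the history (the word read so far) and the next letter,
choose the effect and target state of the transition to take. -/
def Resolver (V : VASS k A) := List A → A → (Fin k → ℤ) × Fin V.n

/-- One step of the run built by a resolver (carrying the prefix read so far). -/
noncomputable def resStep (V : VASS k A) (r : V.Resolver) :
    (List A × Option V.Conf) → A → (List A × Option V.Conf) :=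
  fun p a =>
    (p.1 ++ [a],
      p.2.bind fun c =>
        let t := r p.1 a
        if (c.1, a, t.1, t.2) ∈ V.trans ∧ ∀ i, 0 ≤ ((c.2 i : ℤ) + t.1 i) then
          some (t.2, fun i => ((c.2 i : ℤ) + t.1 i).toNat)
        else none)

/-- The configuration reached by following the resolver on `w` (if the run survives). -/
noncomputable def resRun (V : VASS k A) (r : V.Resolver) (w : List A) : Option V.Conf :=
  (w.foldl (V.resStep r) ([], some V.initConf)).2

/-- History-determinism for coverability acceptance:
some resolver's run accepts every word of the language. -/
def HDCover (V : VASS k A) : Prop :=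
  ∃ r : V.Resolver, ∀ w ∈ V.LangCover,
    ∃ c, V.resRun r w = some c ∧ c.1 ∈ V.acc

/-- History-determinism for reachability acceptance. -/
def HDReach (V : VASS k A) : Prop :=
  ∃ r : V.Resolver, ∀ w ∈ V.LangReach,
    ∃ c, V.resRun r w = some c ∧ c.1 ∈ V.acc ∧ c.2 = fun _ => 0

/-- Coverability language of a VASS with ε-transitions (letter `none` is silent):
the input word is the sequence of actual letters read. -/
def LangCoverE (V : VASS k (Option A)) : Set (List A) :=
  {w | ∃ u c, V.Run V.initConf u c ∧ u.reduceOption = w ∧ c.1 ∈ V.acc}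

/-- Reachability language of a VASS with ε-transitions. -/
def LangReachE (V : VASS k (Option A)) : Set (List A) :=
  {w | ∃ u c, V.Run V.initConf u c ∧ u.reduceOption = w ∧ c.1 ∈ V.acc ∧ c.2 = fun _ => 0}

/-- History-determinism with ε-transitions, coverability: a resolver together with a
(prefix-monotone) scheduling of silent moves accepts every word of the language. -/
def HDCoverE (V : VASS k (Option A)) : Prop :=
  ∃ (r : V.Resolver) (f : List A → List (Option A)),
    (∀ u w, u <+: w → f u <+: f w) ∧
    ∀ w ∈ V.LangCoverE, (f w).reduceOption = w ∧
      ∃ c, V.resRun r (f w) = some c ∧ c.1 ∈ V.acc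

/-- History-determinism with ε-transitions, reachability. -/
def HDReachE (V : VASS k (Option A)) : Prop :=
  ∃ (r : V.Resolver) (f : List A → List (Option A)),
    (∀ u w, u <+: w → f u <+: f w) ∧
    ∀ w ∈ V.LangReachE, (f w).reduceOption = w ∧
      ∃ c, V.resRun r (f w) = some c ∧ c.1 ∈ V.acc ∧ c.2 = fun _ => 0

end VASS

inductive ABC | a | b | c
deriving DecidableEq

open ABC List

/-- The language `a^n b^{≤ n} + a^* b^* c`. -/
def L0 : Set (List ABC) :=
  {w | ∃ n m, m ≤ n ∧ w = replicate n a ++ replicate m b} ∪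
  {w | ∃ n m, w = replicate n a ++ replicate m b ++ [c]}

namespace HD1

def T : Set (Fin 4 × ABC × (Fin 1 → ℤ) × Fin 4) :=
  {((0 : Fin 4), a, fun _ => (1:ℤ), (0 : Fin 4)),
   ((0 : Fin 4), b, fun _ => (-1:ℤ), (1 : Fin 4)),
   ((1 : Fin 4), b, fun _ => (-1:ℤ), (1 : Fin 4)),
   ((0 : Fin 4), b, fun _ => (0:ℤ), (3 : Fin 4)),
   ((1 : Fin 4), b, fun _ => (0:ℤ), (3 : Fin 4)),
   ((3 : Fin 4), b, fun _ => (0:ℤ), (3 : Fin 4)),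
   ((0 : Fin 4), c, fun _ => (0:ℤ), (2 : Fin 4)),
   ((1 : Fin 4), c, fun _ => (0:ℤ), (2 : Fin 4)),
   ((3 : Fin 4), c, fun _ => (0:ℤ), (2 : Fin 4))}

abbrev myV : VASS 1 ABC := ⟨4, T, 0, {0, 1, 2}⟩

def rr : myV.Resolver := fun w x =>
  match x with
  | a => (fun _ => (1:ℤ), (0 : Fin 4))
  | b => if w.count b < w.count a then (fun _ => (-1:ℤ), (1 : Fin 4))
         else (fun _ => (0:ℤ), (3 : Fin 4))
  | c => (fun _ => (0:ℤ), (2 : Fin 4))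

def P0 (v : ℕ) (w : List ABC) : Prop :=
  (∃ n m, m ≤ n + v ∧ w = replicate n a ++ replicate m b) ∨
  (∃ n m, w = replicate n a ++ replicate m b ++ [c])

def P1 (v : ℕ) (w : List ABC) : Prop :=
  (∃ m, m ≤ v ∧ w = replicate m b) ∨ (∃ m, w = replicate m b ++ [c])

def P3 (w : List ABC) : Prop := ∃ m, w = replicate m b ++ [c]

/-- Shape predicate for runs ending in an accepting state. -/
def shape (q : Fin 4) (v : ℕ) (w : List ABC) : Prop :=
  if q = 0 then P0 v w else if q = 1 then P1 v w else if q = 2 then w = [] else P3 w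

@[simp] lemma shape_0 (v w) : shape (0 : Fin 4) v w ↔ P0 v w := by simp [shape]
@[simp] lemma shape_1 (v w) : shape (1 : Fin 4) v w ↔ P1 v w := by
  simp [shape, show (1:Fin 4) ≠ 0 by decide]
@[simp] lemma shape_2 (v w) : shape (2 : Fin 4) v w ↔ w = [] := by
  simp [shape, show (2:Fin 4) ≠ 0 by decide, show (2:Fin 4) ≠ 1 by decide]
@[simp] lemma shape_3 (v w) : shape (3 : Fin 4) v w ↔ P3 w := by
  simp [shape, show (3:Fin 4) ≠ 0 by decide, show (3:Fin 4) ≠ 1 by decide,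
    show (3:Fin 4) ≠ 2 by decide]

lemma run_shape {cfg : myV.Conf} {w : List ABC} {cfg' : myV.Conf}
    (h : myV.Run cfg w cfg') (hacc : cfg'.1 ∈ myV.acc) :
    shape cfg.1 (cfg.2 0) w := by
  induction h with
  | nil cfg =>
      have hq : cfg.1 = (0 : Fin 4) ∨ cfg.1 = (1 : Fin 4) ∨ cfg.1 = (2 : Fin 4) := by
        simpa [myV] using hacc
      rcases hq with hq | hq | hq <;> rw [hq]
      · exact (shape_0 _ _).2 (Or.inl ⟨0, 0, by omega, by simp⟩)
      · exact (shape_1 _ _).2 (Or.inl ⟨0, by omega, by simp⟩)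
      · exact (shape_2 _ _).2 rfl
  | cons ht hn hr ih =>
      rename_i q v x d q' w' c'
      have hsh := ih hacc
      have hmem : ((q, x, d, q') ∈ T) := ht
      simp only [T, Set.mem_insert_iff, Set.mem_singleton_iff, Prod.mk.injEq] at hmem
      rcases hmem with ⟨h1,h2,h3,h4⟩|⟨h1,h2,h3,h4⟩|⟨h1,h2,h3,h4⟩|⟨h1,h2,h3,h4⟩|⟨h1,h2,h3,h4⟩|⟨h1,h2,h3,h4⟩|⟨h1,h2,h3,h4⟩|⟨h1,h2,h3,h4⟩|⟨h1,h2,h3,h4⟩ <;>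
        subst h1 <;> subst h2 <;> subst h3 <;> subst h4 <;>
        simp only [shape_0, shape_1, shape_2, shape_3] at hsh ⊢
      -- (0,a,+1,0)
      · have hv : ((v 0 : ℤ) + 1).toNat = v 0 + 1 := by omega
        rw [hv] at hsh
        rcases hsh with ⟨n, m, hm, hw⟩ | ⟨n, m, hw⟩
        · exact Or.inl ⟨n + 1, m, by omega, by simp [hw, List.replicate_succ]⟩
        · exact Or.inr ⟨n + 1, m, by simp [hw, List.replicate_succ]⟩
      -- (0,b,-1,1)
      · have hge : 1 ≤ v 0 := by have := hn 0; simp at this; omega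
        have hv : ((v 0 : ℤ) + (-1)).toNat = v 0 - 1 := by omega
        rw [hv] at hsh
        rcases hsh with ⟨m, hm, hw⟩ | ⟨m, hw⟩
        · exact Or.inl ⟨0, m + 1, by omega, by simp [hw, List.replicate_succ]⟩
        · exact Or.inr ⟨0, m + 1, by simp [hw, List.replicate_succ]⟩
      -- (1,b,-1,1)
      · have hge : 1 ≤ v 0 := by have := hn 0; simp at this; omega
        have hv : ((v 0 : ℤ) + (-1)).toNat = v 0 - 1 := by omega
        rw [hv] at hsh
        rcases hsh with ⟨m, hm, hw⟩ | ⟨m, hw⟩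
        · exact Or.inl ⟨m + 1, by omega, by simp [List.replicate_succ, hw]⟩
        · exact Or.inr ⟨m + 1, by simp [List.replicate_succ, hw]⟩
      -- (0,b,0,3)
      · obtain ⟨m, hw⟩ := hsh
        exact Or.inr ⟨0, m + 1, by simp [List.replicate_succ, hw]⟩
      -- (1,b,0,3)
      · obtain ⟨m, hw⟩ := hsh
        exact Or.inr ⟨m + 1, by simp [List.replicate_succ, hw]⟩
      -- (3,b,0,3)
      · obtain ⟨m, hw⟩ := hsh
        exact ⟨m + 1, by simp [List.replicate_succ, hw]⟩
      -- (0,c,0,2)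
      · rw [hsh]; exact Or.inr ⟨0, 0, by simp⟩
      -- (1,c,0,2)
      · rw [hsh]; exact Or.inr ⟨0, by simp⟩
      -- (3,c,0,2)
      · rw [hsh]; exact ⟨0, by simp⟩

lemma foldl_none (w : List ABC) (pre : List ABC) :
    (List.foldl (myV.resStep rr) (pre, none) w).2 = none := by
  induction w generalizing pre with
  | nil => rfl
  | cons x t ih => simpa [VASS.resStep] using ih (pre ++ [x])

lemma sound (w : List ABC) : ∀ (pre : List ABC) (c0 cf : myV.Conf),
    (List.foldl (myV.resStep rr) (pre, some c0) w).2 = some cf → myV.Run c0 w cf := by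
  induction w with
  | nil => intro pre c0 cf h; cases h; exact VASS.Run.nil _
  | cons x t ih =>
      intro pre c0 cf h
      rw [List.foldl_cons] at h
      by_cases hc : (c0.1, x, (rr pre x).1, (rr pre x).2) ∈ myV.trans ∧
          ∀ i, 0 ≤ ((c0.2 i : ℤ) + (rr pre x).1 i)
      · have hstep : myV.resStep rr (pre, some c0) x =
            (pre ++ [x], some ((rr pre x).2, fun i => ((c0.2 i : ℤ) + (rr pre x).1 i).toNat)) := by
          simp only [VASS.resStep, Option.bind_some]
          rw [if_pos hc]
        rw [hstep] at h
        exact VASS.Run.cons hc.1 hc.2 (ih _ _ _ h)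
      · have hstep : myV.resStep rr (pre, some c0) x = (pre ++ [x], none) := by
          simp only [VASS.resStep, Option.bind_some]
          rw [if_neg hc]
        rw [hstep, foldl_none] at h
        exact absurd h (by simp)

lemma step_eval (pre : List ABC) (x : ABC) (s : Fin 4) (v : Fin 1 → ℕ)
    (d : Fin 1 → ℤ) (s' : Fin 4) (hres : rr pre x = (d, s'))
    (ht : (s, x, d, s') ∈ T) (hnn : ∀ i, 0 ≤ (v i : ℤ) + d i)
    (v' : Fin 1 → ℕ) (hv : (fun i => ((v i : ℤ) + d i).toNat) = v') :
    myV.resStep rr (pre, some (s, v)) x = (pre ++ [x], some (s', v')) := by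
  simp only [VASS.resStep, Option.bind_some]
  rw [hres]
  rw [if_pos ⟨ht, hnn⟩]
  rw [hv]

lemma phaseA (n : ℕ) : ∀ k : ℕ,
    List.foldl (myV.resStep rr) (replicate k a, some ((0 : Fin 4), fun _ => k)) (replicate n a)
      = (replicate (k + n) a, some ((0 : Fin 4), fun _ => (k + n : ℕ))) := by
  induction n with
  | zero => intro k; simp
  | succ n ih =>
      intro k
      rw [List.replicate_succ, List.foldl_cons,
        step_eval (replicate k a) a 0 (fun _ => k) (fun _ => 1) 0 rfl
          (by simp [T]) (fun i => by omega) (fun _ => (k + 1 : ℕ))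
          (by funext i; omega),
        ← List.replicate_succ']
      have hk : k + (n + 1) = (k + 1) + n := by omega
      rw [hk]
      exact ih (k + 1)

lemma phaseBdec (n : ℕ) : ∀ (m j : ℕ) (s : Fin 4), (s = 0 ∨ s = 1) → j + m ≤ n →
    ∃ s' : Fin 4, (s' = 0 ∨ s' = 1) ∧
      List.foldl (myV.resStep rr)
        (replicate n a ++ replicate j b, some (s, fun _ => (n - j : ℕ))) (replicate m b)
      = (replicate n a ++ replicate (j + m) b, some (s', fun _ => (n - (j + m) : ℕ))) := by
  intro m
  induction m with
  | zero => intro j s hs _; exact ⟨s, hs, by simp⟩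
  | succ m ih =>
      intro j s hs hle
      have hjn : j < n := by omega
      have hres : rr (replicate n a ++ replicate j b) b = (fun _ => (-1:ℤ), (1 : Fin 4)) := by
        simp only [rr]
        rw [if_pos]
        simp [List.count_append, List.count_replicate]
        omega
      have ht : (s, b, fun _ => (-1:ℤ), (1 : Fin 4)) ∈ T := by
        rcases hs with hs | hs <;> subst hs <;> simp [T]
      rw [List.replicate_succ, List.foldl_cons,
        step_eval _ b s (fun _ => (n - j : ℕ)) (fun _ => (-1:ℤ)) 1 hres ht
          (fun i => by omega) (fun _ => (n - (j + 1) : ℕ)) (by funext i; omega)]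
      have happ : replicate n a ++ replicate j b ++ [b]
          = replicate n a ++ replicate (j + 1) b := by
        rw [List.append_assoc, ← List.replicate_succ']
      rw [happ]
      obtain ⟨s', hs', heq⟩ := ih (j + 1) 1 (Or.inr rfl) (by omega)
      refine ⟨s', hs', ?_⟩
      rw [heq]
      have : j + 1 + m = j + (m + 1) := by omega
      rw [this]

lemma phaseBfree (n : ℕ) : ∀ (m j : ℕ) (s : Fin 4) (v : Fin 1 → ℕ),
    (s = 0 ∨ s = 1 ∨ s = 3) → n ≤ j →
    ∃ s' : Fin 4, (s' = 0 ∨ s' = 1 ∨ s' = 3) ∧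
      List.foldl (myV.resStep rr)
        (replicate n a ++ replicate j b, some (s, v)) (replicate m b)
      = (replicate n a ++ replicate (j + m) b, some (s', v)) := by
  intro m
  induction m with
  | zero => intro j s v hs _; exact ⟨s, hs, by simp⟩
  | succ m ih =>
      intro j s v hs hle
      have hres : rr (replicate n a ++ replicate j b) b = (fun _ => (0:ℤ), (3 : Fin 4)) := by
        simp only [rr]
        rw [if_neg]
        simp [List.count_append, List.count_replicate]
        omega
      have ht : (s, b, fun _ => (0:ℤ), (3 : Fin 4)) ∈ T := by
        rcases hs with hs | hs | hs <;> subst hs <;> simp [T]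
      rw [List.replicate_succ, List.foldl_cons,
        step_eval _ b s v (fun _ => (0:ℤ)) 3 hres ht
          (fun i => by omega) v (by funext i; omega)]
      have happ : replicate n a ++ replicate j b ++ [b]
          = replicate n a ++ replicate (j + 1) b := by
        rw [List.append_assoc, ← List.replicate_succ']
      rw [happ]
      obtain ⟨s', hs', heq⟩ := ih (j + 1) 3 v (Or.inr (Or.inr rfl)) (by omega)
      refine ⟨s', hs', ?_⟩
      rw [heq]
      have : j + 1 + m = j + (m + 1) := by omega
      rw [this]

lemma stepC (pre : List ABC) (s : Fin 4) (v : Fin 1 → ℕ) (hs : s = 0 ∨ s = 1 ∨ s = 3) :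
    List.foldl (myV.resStep rr) (pre, some (s, v)) [c] = (pre ++ [c], some ((2 : Fin 4), v)) := by
  have ht : (s, c, fun _ => (0:ℤ), (2 : Fin 4)) ∈ T := by
    rcases hs with hs | hs | hs <;> subst hs <;> simp [T]
  rw [List.foldl_cons,
    step_eval pre c s v (fun _ => (0:ℤ)) 2 rfl ht (fun i => by omega)
      v (by funext i; omega)]
  rfl

lemma runAB (n m : ℕ) :
    ∃ (s' : Fin 4) (v : Fin 1 → ℕ), (s' = 0 ∨ s' = 1 ∨ s' = 3) ∧ (m ≤ n → (s' = 0 ∨ s' = 1)) ∧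
      List.foldl (myV.resStep rr) ([], some myV.initConf) (replicate n a ++ replicate m b)
        = (replicate n a ++ replicate m b, some (s', v)) := by
  have h0 : List.foldl (myV.resStep rr) ([], some myV.initConf) (replicate n a)
      = (replicate n a, some ((0 : Fin 4), fun _ => (n : ℕ))) := by
    have := phaseA n 0
    simpa [VASS.initConf] using this
  by_cases hmn : m ≤ n
  · obtain ⟨s', hs', heq⟩ := phaseBdec n m 0 0 (Or.inl rfl) (by omega)
    refine ⟨s', fun _ => (n - m : ℕ), Or.imp_right Or.inl hs', fun _ => hs', ?_⟩
    rw [List.foldl_append, h0]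
    simpa using heq
  · obtain ⟨s', hs', heq⟩ := phaseBdec n n 0 0 (Or.inl rfl) (by omega)
    obtain ⟨s'', hs'', heq2⟩ := phaseBfree n (m - n) n s' (fun _ => (n - n : ℕ))
      (Or.imp_right Or.inl hs') (le_refl n)
    refine ⟨s'', fun _ => (n - n : ℕ), hs'', fun h => absurd h hmn, ?_⟩
    have hsplit : replicate m b = replicate n b ++ replicate (m - n) b := by
      rw [← List.replicate_add]
      congr 1
      omega
    rw [hsplit, ← List.append_assoc, List.foldl_append, List.foldl_append, h0]
    have heq' : List.foldl (myV.resStep rr)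
        (replicate n a, some ((0:Fin 4), fun _ => (n : ℕ))) (replicate n b)
        = (replicate n a ++ replicate n b, some (s', fun _ => (n - n : ℕ))) := by
      simpa using heq
    rw [heq', heq2]
    have : n + (m - n) = m := by omega
    rw [this, hsplit, List.append_assoc]

lemma accept : ∀ w ∈ L0, ∃ cf, myV.resRun rr w = some cf ∧ cf.1 ∈ myV.acc := by
  rintro w (⟨n, m, hmn, rfl⟩ | ⟨n, m, rfl⟩)
  · obtain ⟨s', v, _, h2, heq⟩ := runAB n m
    refine ⟨(s', v), ?_, ?_⟩
    · simp only [VASS.resRun, heq]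
    · rcases h2 hmn with h | h <;> subst h <;> simp [myV]
  · obtain ⟨s', v, h1, _, heq⟩ := runAB n m
    refine ⟨((2 : Fin 4), v), ?_, by simp [myV]⟩
    simp only [VASS.resRun, List.foldl_append, heq]
    rw [stepC _ _ _ h1]

theorem main : myV.HDCover ∧ myV.LangCover = L0 := by
  have hsub : myV.LangCover ⊆ L0 := by
    rintro w ⟨cf, hrun, hacc⟩
    have := run_shape hrun hacc
    have h0 : shape (0 : Fin 4) 0 w := this
    rw [shape_0] at h0
    rcases h0 with ⟨n, m, hm, hw⟩ | ⟨n, m, hw⟩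
    · exact Or.inl ⟨n, m, by omega, hw⟩
    · exact Or.inr ⟨n, m, hw⟩
  have hsup : L0 ⊆ myV.LangCover := by
    intro w hw
    obtain ⟨cf, hres, hacc⟩ := accept w hw
    exact ⟨cf, sound w [] myV.initConf cf hres, hacc⟩
  refine ⟨⟨rr, fun w hw => accept w (hsub hw)⟩, Set.Subset.antisymm hsub hsup⟩

end HD1

/-- `L0` is recognised by a history-deterministic 1-VASS with coverability acceptance. -/
theorem stmt1 : ∃ V : VASS 1 ABC, V.HDCover ∧ V.LangCover = L0 := by
  exact ⟨HD1.myV, HD1.main⟩
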